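/- arXiv:2406.19496 — 2 statements merged into one kernel-verified Lean document; each statement's English description precedes it below -/
import Mathlib

section
/- Let u : ℝ × ℝ × ℝ → ℝ, written u(x,y,t), be infinitely differentiable and satisfy the wave equation ∂_t²u = c²Δu everywhere. Define g(y,t) = ∂_x u(0,y,t). Then for all natural numbers q and α and all y,t, the Neumann compatibility boundary conditions hold: ∂_t^{2q} ∂_y^α g(y,t) = c^{2q} Σ_{k=0}^{q} C(q,k) ∂_x^{2(q−k)+1} ∂_y^{2k+α} u(0,y,t). -/
/-- Partial derivative in the first (x) variable. -/
noncomputable def pdx (f : ℝ × ℝ × ℝ → ℝ) : ℝ × ℝ × ℝ → ℝ :=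
  fun p => deriv (fun x => f (x, p.2.1, p.2.2)) p.1

/-- Partial derivative in the second (y) variable. -/
noncomputable def pdy (f : ℝ × ℝ × ℝ → ℝ) : ℝ × ℝ × ℝ → ℝ :=
  fun p => deriv (fun y => f (p.1, y, p.2.2)) p.2.1

/-- Partial derivative in the third (t) variable. -/
noncomputable def pdt (f : ℝ × ℝ × ℝ → ℝ) : ℝ × ℝ × ℝ → ℝ :=
  fun p => deriv (fun t => f (p.1, p.2.1, t)) p.2.2

/-- Partial derivative in the first variable of a function of two variables. -/
noncomputable def pd1 (f : ℝ × ℝ → ℝ) : ℝ × ℝ → ℝ :=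
  fun p => deriv (fun x => f (x, p.2)) p.1

/-- Partial derivative in the second variable of a function of two variables. -/
noncomputable def pd2 (f : ℝ × ℝ → ℝ) : ℝ × ℝ → ℝ :=
  fun p => deriv (fun y => f (p.1, y)) p.2

abbrev E3 : Type := ℝ × ℝ × ℝ

lemma hasDerivAt_slice1 (f : E3 → ℝ) (p : E3) (hf : DifferentiableAt ℝ f p) :
    HasDerivAt (fun x => f (x, p.2.1, p.2.2)) (fderiv ℝ f p (1,0,0)) p.1 := by
  have hl : HasDerivAt (fun x : ℝ => ((x, p.2.1, p.2.2) : E3)) ((1:ℝ),(0:ℝ),(0:ℝ)) p.1 :=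
    HasDerivAt.prodMk (hasDerivAt_id p.1) (HasDerivAt.prodMk (hasDerivAt_const _ _) (hasDerivAt_const _ _))
  have := hf.hasFDerivAt.comp_hasDerivAt p.1 hl
  exact this

lemma hasDerivAt_slice2 (f : E3 → ℝ) (p : E3) (hf : DifferentiableAt ℝ f p) :
    HasDerivAt (fun y => f (p.1, y, p.2.2)) (fderiv ℝ f p (0,1,0)) p.2.1 := by
  have hl : HasDerivAt (fun y : ℝ => ((p.1, y, p.2.2) : E3)) ((0:ℝ),(1:ℝ),(0:ℝ)) p.2.1 :=
    HasDerivAt.prodMk (hasDerivAt_const _ _) (HasDerivAt.prodMk (hasDerivAt_id p.2.1) (hasDerivAt_const _ _))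
  have := hf.hasFDerivAt.comp_hasDerivAt p.2.1 hl
  exact this

lemma hasDerivAt_slice3 (f : E3 → ℝ) (p : E3) (hf : DifferentiableAt ℝ f p) :
    HasDerivAt (fun t => f (p.1, p.2.1, t)) (fderiv ℝ f p (0,0,1)) p.2.2 := by
  have hl : HasDerivAt (fun t : ℝ => ((p.1, p.2.1, t) : E3)) ((0:ℝ),(0:ℝ),(1:ℝ)) p.2.2 :=
    HasDerivAt.prodMk (hasDerivAt_const _ _) (HasDerivAt.prodMk (hasDerivAt_const _ _) (hasDerivAt_id p.2.2))
  have := hf.hasFDerivAt.comp_hasDerivAt p.2.2 hl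
  exact this

lemma pdx_eq (f : E3 → ℝ) (hf : ContDiff ℝ (⊤ : ℕ∞) f) :
    pdx f = fun p => fderiv ℝ f p (1,0,0) := by
  funext p
  exact (hasDerivAt_slice1 f p (hf.differentiable (by simp)).differentiableAt).deriv

lemma pdy_eq (f : E3 → ℝ) (hf : ContDiff ℝ (⊤ : ℕ∞) f) :
    pdy f = fun p => fderiv ℝ f p (0,1,0) := by
  funext p
  exact (hasDerivAt_slice2 f p (hf.differentiable (by simp)).differentiableAt).deriv

lemma pdt_eq (f : E3 → ℝ) (hf : ContDiff ℝ (⊤ : ℕ∞) f) :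
    pdt f = fun p => fderiv ℝ f p (0,0,1) := by
  funext p
  exact (hasDerivAt_slice3 f p (hf.differentiable (by simp)).differentiableAt).deriv

lemma fderiv_smooth (f : E3 → ℝ) (hf : ContDiff ℝ (⊤ : ℕ∞) f) : ContDiff ℝ (⊤ : ℕ∞) (fderiv ℝ f) :=
  hf.fderiv_right (by simp)

lemma pdx_smooth (f : E3 → ℝ) (hf : ContDiff ℝ (⊤ : ℕ∞) f) : ContDiff ℝ (⊤ : ℕ∞) (pdx f) := by
  rw [pdx_eq f hf]; exact (fderiv_smooth f hf).clm_apply contDiff_const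

lemma pdy_smooth (f : E3 → ℝ) (hf : ContDiff ℝ (⊤ : ℕ∞) f) : ContDiff ℝ (⊤ : ℕ∞) (pdy f) := by
  rw [pdy_eq f hf]; exact (fderiv_smooth f hf).clm_apply contDiff_const

lemma pdt_smooth (f : E3 → ℝ) (hf : ContDiff ℝ (⊤ : ℕ∞) f) : ContDiff ℝ (⊤ : ℕ∞) (pdt f) := by
  rw [pdt_eq f hf]; exact (fderiv_smooth f hf).clm_apply contDiff_const

-- second derivative application
lemma fderiv_fderiv_apply (f : E3 → ℝ) (hf : ContDiff ℝ (⊤ : ℕ∞) f) (p v w : E3) :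
    fderiv ℝ (fun q => fderiv ℝ f q w) p v = fderiv ℝ (fderiv ℝ f) p v w := by
  have hc : DifferentiableAt ℝ (fderiv ℝ f) p :=
    ((fderiv_smooth f hf).differentiable (by simp)).differentiableAt
  rw [fderiv_clm_apply hc (differentiableAt_const w)]
  simp

lemma sym (f : E3 → ℝ) (hf : ContDiff ℝ (⊤ : ℕ∞) f) (p v w : E3) :
    fderiv ℝ (fderiv ℝ f) p v w = fderiv ℝ (fderiv ℝ f) p w v :=
  (hf.contDiffAt.isSymmSndFDerivAt (by rw [minSmoothness_of_isRCLikeNormedField]; exact WithTop.coe_le_coe.mpr (le_top : (2 : ℕ∞) ≤ ⊤))) v w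

lemma pd_comm_gen (f : E3 → ℝ) (hf : ContDiff ℝ (⊤ : ℕ∞) f) (v w : E3) (p : E3) :
    fderiv ℝ (fun q => fderiv ℝ f q w) p v = fderiv ℝ (fun q => fderiv ℝ f q v) p w := by
  rw [fderiv_fderiv_apply f hf, fderiv_fderiv_apply f hf, sym f hf]

lemma pdx_pdy_comm (f : E3 → ℝ) (hf : ContDiff ℝ (⊤ : ℕ∞) f) :
    pdx (pdy f) = pdy (pdx f) := by
  rw [pdx_eq _ (pdy_smooth f hf), pdy_eq _ (pdx_smooth f hf), pdy_eq f hf, pdx_eq f hf]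
  funext p
  exact pd_comm_gen f hf _ _ p

lemma pdx_pdt_comm (f : E3 → ℝ) (hf : ContDiff ℝ (⊤ : ℕ∞) f) :
    pdx (pdt f) = pdt (pdx f) := by
  rw [pdx_eq _ (pdt_smooth f hf), pdt_eq _ (pdx_smooth f hf), pdt_eq f hf, pdx_eq f hf]
  funext p
  exact pd_comm_gen f hf _ _ p

lemma pdy_pdt_comm (f : E3 → ℝ) (hf : ContDiff ℝ (⊤ : ℕ∞) f) :
    pdy (pdt f) = pdt (pdy f) := by
  rw [pdy_eq _ (pdt_smooth f hf), pdt_eq _ (pdy_smooth f hf), pdt_eq f hf, pdy_eq f hf]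
  funext p
  exact pd_comm_gen f hf _ _ p

-- linearity
lemma pdx_lin (a : ℝ) (A B : E3 → ℝ) (hA : ContDiff ℝ (⊤ : ℕ∞) A) (hB : ContDiff ℝ (⊤ : ℕ∞) B) :
    pdx (fun p => a * (A p + B p)) = fun p => a * (pdx A p + pdx B p) := by
  funext p
  have hA' := hasDerivAt_slice1 A p (hA.differentiable (by simp)).differentiableAt
  have hB' := hasDerivAt_slice1 B p (hB.differentiable (by simp)).differentiableAt
  have := ((hA'.add hB').const_mul a).deriv
  rw [pdx_eq A hA, pdx_eq B hB]
  exact this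

lemma pdy_lin (a : ℝ) (A B : E3 → ℝ) (hA : ContDiff ℝ (⊤ : ℕ∞) A) (hB : ContDiff ℝ (⊤ : ℕ∞) B) :
    pdy (fun p => a * (A p + B p)) = fun p => a * (pdy A p + pdy B p) := by
  funext p
  have hA' := hasDerivAt_slice2 A p (hA.differentiable (by simp)).differentiableAt
  have hB' := hasDerivAt_slice2 B p (hB.differentiable (by simp)).differentiableAt
  have := ((hA'.add hB').const_mul a).deriv
  rw [pdy_eq A hA, pdy_eq B hB]
  exact this

lemma pdt_lin (a : ℝ) (A B : E3 → ℝ) (hA : ContDiff ℝ (⊤ : ℕ∞) A) (hB : ContDiff ℝ (⊤ : ℕ∞) B) :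
    pdt (fun p => a * (A p + B p)) = fun p => a * (pdt A p + pdt B p) := by
  funext p
  have hA' := hasDerivAt_slice3 A p (hA.differentiable (by simp)).differentiableAt
  have hB' := hasDerivAt_slice3 B p (hB.differentiable (by simp)).differentiableAt
  have := ((hA'.add hB').const_mul a).deriv
  rw [pdt_eq A hA, pdt_eq B hB]
  exact this

lemma pdy_iter_pdx (m : ℕ) (f : E3 → ℝ) (hf : ContDiff ℝ (⊤ : ℕ∞) f) :
    pdy^[m] (pdx f) = pdx (pdy^[m] f) := by
  induction m generalizing f with
  | zero => rfl
  | succ m ih =>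
      rw [Function.iterate_succ_apply, Function.iterate_succ_apply,
        ← pdx_pdy_comm f hf, ih (pdy f) (pdy_smooth f hf)]

lemma iter_pdt_lin (n : ℕ) (a : ℝ) (A B : E3 → ℝ)
    (hA : ContDiff ℝ (⊤ : ℕ∞) A) (hB : ContDiff ℝ (⊤ : ℕ∞) B) :
    pdt^[n] (fun p => a * (A p + B p)) = fun p => a * (pdt^[n] A p + pdt^[n] B p) := by
  induction n generalizing A B with
  | zero => rfl
  | succ n ih =>
      rw [Function.iterate_succ_apply, pdt_lin a A B hA hB,
        ih (pdt A) (pdt B) (pdt_smooth A hA) (pdt_smooth B hB),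
        Function.iterate_succ_apply, Function.iterate_succ_apply]

def IsWave (c : ℝ) (v : E3 → ℝ) : Prop :=
  ContDiff ℝ (⊤ : ℕ∞) v ∧ pdt (pdt v) = fun p => c ^ 2 * (pdx (pdx v) p + pdy (pdy v) p)

lemma IsWave.px {c : ℝ} {v : E3 → ℝ} (h : IsWave c v) : IsWave c (pdx v) := by
  obtain ⟨hs, hw⟩ := h
  refine ⟨pdx_smooth v hs, ?_⟩
  have h1 : pdt (pdt (pdx v)) = pdx (pdt (pdt v)) := by
    rw [← pdx_pdt_comm v hs, ← pdx_pdt_comm (pdt v) (pdt_smooth v hs)]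
  rw [h1, hw, pdx_lin (c^2) _ _ (pdx_smooth _ (pdx_smooth v hs)) (pdy_smooth _ (pdy_smooth v hs))]
  have h2 : pdx (pdy (pdy v)) = pdy (pdy (pdx v)) := by
    rw [pdx_pdy_comm (pdy v) (pdy_smooth v hs), pdx_pdy_comm v hs]
  rw [h2]

lemma IsWave.py {c : ℝ} {v : E3 → ℝ} (h : IsWave c v) : IsWave c (pdy v) := by
  obtain ⟨hs, hw⟩ := h
  refine ⟨pdy_smooth v hs, ?_⟩
  have h1 : pdt (pdt (pdy v)) = pdy (pdt (pdt v)) := by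
    rw [← pdy_pdt_comm v hs, ← pdy_pdt_comm (pdt v) (pdt_smooth v hs)]
  rw [h1, hw, pdy_lin (c^2) _ _ (pdx_smooth _ (pdx_smooth v hs)) (pdy_smooth _ (pdy_smooth v hs))]
  have h2 : pdy (pdx (pdx v)) = pdx (pdx (pdy v)) := by
    rw [← pdx_pdy_comm (pdx v) (pdx_smooth v hs), ← pdx_pdy_comm v hs]
  rw [h2]

lemma pascal_sum (f : ℕ → ℝ) (q : ℕ) :
    ∑ k ∈ Finset.range (q+1), (q.choose k : ℝ) * f k
      + ∑ k ∈ Finset.range (q+1), (q.choose k : ℝ) * f (k+1)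
    = ∑ k ∈ Finset.range (q+2), ((q+1).choose k : ℝ) * f k := by
  rw [Finset.sum_range_succ' (fun k => ((q+1).choose k : ℝ) * f k) (q+1),
    Finset.sum_range_succ' (fun k => (q.choose k : ℝ) * f k) q]
  have h1 : ∀ k, (((q+1).choose (k+1) : ℕ) : ℝ) = (q.choose k : ℝ) + (q.choose (k+1) : ℝ) := by
    intro k
    rw [Nat.choose_succ_succ]
    push_cast
    ring
  have h2 : ∑ k ∈ Finset.range (q+1), ((q+1).choose (k+1) : ℝ) * f (k+1)
      = ∑ k ∈ Finset.range (q+1), (q.choose k : ℝ) * f (k+1)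
        + ∑ k ∈ Finset.range (q+1), (q.choose (k+1) : ℝ) * f (k+1) := by
    rw [← Finset.sum_add_distrib]
    apply Finset.sum_congr rfl
    intro k _
    rw [h1]; ring
  have h3 : ∑ k ∈ Finset.range (q+1), (q.choose (k+1) : ℝ) * f (k+1)
      = ∑ k ∈ Finset.range q, (q.choose (k+1) : ℝ) * f (k+1) := by
    rw [Finset.sum_range_succ, Nat.choose_succ_self]
    simp
  simp only [h2, h3, Nat.choose_zero_right]
  push_cast
  ring

lemma main_formula (c : ℝ) : ∀ (q : ℕ) (v : E3 → ℝ), IsWave c v →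
    pdt^[2*q] v = fun p => c^(2*q) * ∑ k ∈ Finset.range (q+1),
      (q.choose k : ℝ) * (pdx^[2*(q-k)] (pdy^[2*k] v)) p := by
  intro q
  induction q with
  | zero => intro v hv; funext p; simp
  | succ q ih =>
    intro v hv
    funext p
    have hA : IsWave c (pdx (pdx v)) := hv.px.px
    have hB : IsWave c (pdy (pdy v)) := hv.py.py
    have e1 : 2*(q+1) = 2*q + 2 := by ring
    rw [e1, Function.iterate_add_apply]
    have e2 : pdt^[2] v = fun p => c^2 * (pdx (pdx v) p + pdy (pdy v) p) := hv.2
    rw [e2, iter_pdt_lin (2*q) (c^2) _ _ hA.1 hB.1, ih _ hA, ih _ hB]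
    simp only []
    have hs1 : ∑ k ∈ Finset.range (q+1),
        (q.choose k : ℝ) * (pdx^[2*(q-k)] (pdy^[2*k] (pdx (pdx v)))) p
        = ∑ k ∈ Finset.range (q+1),
          (q.choose k : ℝ) * (pdx^[2*((q+1)-k)] (pdy^[2*k] v)) p := by
      apply Finset.sum_congr rfl
      intro k hk
      have hk' : k ≤ q := Nat.lt_succ_iff.mp (Finset.mem_range.mp hk)
      have c1 : pdy^[2*k] (pdx (pdx v)) = pdx (pdx (pdy^[2*k] v)) := by
        rw [pdy_iter_pdx (2*k) (pdx v) (pdx_smooth v hv.1),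
          pdy_iter_pdx (2*k) v hv.1]
      have e3 : 2*((q+1)-k) = 2*(q-k) + 2 := by omega
      rw [c1, e3, Function.iterate_add_apply]
      rfl
    have hs2 : ∑ k ∈ Finset.range (q+1),
        (q.choose k : ℝ) * (pdx^[2*(q-k)] (pdy^[2*k] (pdy (pdy v)))) p
        = ∑ k ∈ Finset.range (q+1),
          (q.choose k : ℝ) * (pdx^[2*((q+1)-(k+1))] (pdy^[2*(k+1)] v)) p := by
      apply Finset.sum_congr rfl
      intro k hk
      have c1 : pdy^[2*k] (pdy (pdy v)) = pdy^[2*(k+1)] v := by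
        rw [show 2*(k+1) = 2*k + 2 from by ring, Function.iterate_add_apply]
        rfl
      have e3 : 2*((q+1)-(k+1)) = 2*(q-k) := by omega
      rw [c1, e3]
    have key := pascal_sum (fun j => pdx^[2*((q+1)-j)] (pdy^[2*j] v) p) q
    beta_reduce at key
    rw [hs1, hs2, show q+1+1 = q+2 from rfl, ← key]
    ring

def restr (h : E3 → ℝ) : ℝ × ℝ → ℝ := fun p => h (0, p.1, p.2)

lemma pd1_restr (h : E3 → ℝ) : pd1 (restr h) = restr (pdy h) := rfl
lemma pd2_restr (h : E3 → ℝ) : pd2 (restr h) = restr (pdt h) := rfl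

lemma pd1_iter_restr (n : ℕ) (h : E3 → ℝ) : pd1^[n] (restr h) = restr (pdy^[n] h) := by
  induction n generalizing h with
  | zero => rfl
  | succ n ih =>
      rw [Function.iterate_succ_apply, pd1_restr, ih,
        Function.iterate_succ_apply]

lemma pd2_iter_restr (n : ℕ) (h : E3 → ℝ) : pd2^[n] (restr h) = restr (pdt^[n] h) := by
  induction n generalizing h with
  | zero => rfl
  | succ n ih =>
      rw [Function.iterate_succ_apply, pd2_restr, ih,
        Function.iterate_succ_apply]

lemma IsWave.iter_py {c : ℝ} (n : ℕ) {v : E3 → ℝ} (h : IsWave c v) : IsWave c (pdy^[n] v) := by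
  induction n generalizing v with
  | zero => exact h
  | succ n ih => rw [Function.iterate_succ_apply]; exact ih h.py


theorem neumann_cbc_conditions
    (c : ℝ) (u : ℝ × ℝ × ℝ → ℝ) (hu : ContDiff ℝ (⊤ : ℕ∞) u)
    (hwave : ∀ p : ℝ × ℝ × ℝ,
      pdt (pdt u) p = c ^ 2 * (pdx (pdx u) p + pdy (pdy u) p))
    (g : ℝ × ℝ → ℝ) (hg : g = fun p : ℝ × ℝ => pdx u (0, p.1, p.2)) :
    ∀ (q α : ℕ) (y t : ℝ),
      (pd2^[2 * q] (pd1^[α] g)) (y, t)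
        = c ^ (2 * q) * ∑ k ∈ Finset.range (q + 1),
            (q.choose k : ℝ) * (pdx^[2 * (q - k) + 1] (pdy^[2 * k + α] u)) (0, y, t) := by
  intro q α y t
  have hwu : IsWave c u := ⟨hu, funext hwave⟩
  have hg' : g = restr (pdx u) := hg
  have hv : IsWave c (pdy^[α] (pdx u)) := (hwu.px).iter_py α
  have lhs : (pd2^[2 * q] (pd1^[α] g)) (y, t)
      = pdt^[2*q] (pdy^[α] (pdx u)) (0, y, t) := by
    rw [hg', pd1_iter_restr, pd2_iter_restr]
    rfl
  rw [lhs, main_formula c q _ hv]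
  simp only []
  congr 1
  apply Finset.sum_congr rfl
  intro k hk
  have c1 : pdy^[2*k] (pdy^[α] (pdx u)) = pdx (pdy^[2*k+α] u) := by
    rw [← Function.iterate_add_apply, pdy_iter_pdx (2*k+α) u hu]
  rw [c1, ← Function.iterate_succ_apply]
end

section
/- Let c ∈ ℝ. For all natural numbers q ≤ m and α ≤ 2m+1, applying the operator c^{2q} ∂_x ∂_y^α Δ^q to the tensor-product Taylor polynomial p and evaluating at the center gives c^{2q} ∂_x ∂_y^α Δ^q p(x_i, y_j) = c^{2q} Σ_{k} C(q,k) · (2(q−k)+1)!/Δx^{2(q−k)+1} · (2k+α)!/Δy^{2k+α} · c_{2(q−k)+1, 2k+α}, where the sum runs over 0 ≤ k ≤ q with 2k+α ≤ 2m+1. -/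
open Finset

/-- The Laplacian Δ = ∂_x² + ∂_y². -/
noncomputable def lapl2 (f : ℝ × ℝ → ℝ) : ℝ × ℝ → ℝ :=
  fun p => pd1 (pd1 f) p + pd2 (pd2 f) p

/-- The tensor-product Taylor polynomial
p(x,y) = Σ_{l₁=0}^{2m+1} Σ_{l₂=0}^{2m+1} c_{l₁,l₂} ((x−xᵢ)/Δx)^{l₁} ((y−yⱼ)/Δy)^{l₂}. -/
noncomputable def taylorPoly (m : ℕ) (xi yj dx dy : ℝ) (co : ℕ → ℕ → ℝ) : ℝ × ℝ → ℝ :=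
  fun p => ∑ l₁ ∈ Finset.range (2 * m + 2), ∑ l₂ ∈ Finset.range (2 * m + 2),
    co l₁ l₂ * ((p.1 - xi) / dx) ^ l₁ * ((p.2 - yj) / dy) ^ l₂

/-
After the change of variables u = (x - xᵢ)/Δx, v = (y - yⱼ)/Δy, a polynomial whose coefficient
array b vanishes outside the box [0, n]² is mapped by ∂ₓ and ∂_y to a polynomial of the same
kind, with b transformed by the commuting shift operators
  (Dₓ b)(l₁, l₂) = (l₁ + 1)/Δx · b(l₁ + 1, l₂),   (D_y b)(l₁, l₂) = (l₂ + 1)/Δy · b(l₁, l₂ + 1).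
Hence ∂ₓ ∂_y^α Δ^q acts on coefficients as Dₓ D_y^α (Dₓ² + D_y²)^q, which the binomial theorem
expands into Σₖ C(q,k) Dₓ^(2(q-k)+1) D_y^(2k+α). Evaluating at the centre reads off the constant
coefficient, and Dₓ^i D_y^j moves b_{i,j} there with the factor i! j!/(Δx^i Δy^j). The terms with
2k + α > 2m + 1 vanish because p has no coefficients outside the box.
-/

theorem hasDerivAt_sum_range_mul_div_pow (a : ℕ → ℝ) {n : ℕ} (ha : a (n + 1) = 0)
    (x₀ d x : ℝ) :
    HasDerivAt (fun x => ∑ l ∈ range (n + 1), a l * ((x - x₀) / d) ^ l)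
      (∑ l ∈ range (n + 1), (l + 1) / d * a (l + 1) * ((x - x₀) / d) ^ l) x := by
  have h : HasDerivAt (fun x => ∑ l ∈ range (n + 1), a l * ((x - x₀) / d) ^ l)
      (∑ l ∈ range (n + 1), a l * (l * ((x - x₀) / d) ^ (l - 1) * (1 / d))) x :=
    HasDerivAt.fun_sum fun l _ =>
      ((((hasDerivAt_id x).sub_const x₀).div_const d).pow l).const_mul (a l)
  refine h.congr_deriv ?_
  rw [sum_range_succ', sum_range_succ _ n, ha]
  simp only [mul_zero, add_zero, Nat.cast_zero, zero_mul, Nat.cast_add,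
    Nat.cast_one, add_tsub_cancel_right]
  refine sum_congr rfl fun l _ => ?_
  ring

theorem iterate_apply_eq_of_mapsTo {α β : Type*} {F : α → β} {L : α → α} {T : β → β}
    {s : Set α} (hL : Set.MapsTo L s s) (h : ∀ a ∈ s, T (F a) = F (L a)) (n : ℕ)
    {a : α} (ha : a ∈ s) : T^[n] (F a) = F (L^[n] a) := by
  induction n generalizing a with
  | zero => rfl
  | succ n ih =>
    rw [Function.iterate_succ_apply, Function.iterate_succ_apply, h a ha, ih (hL ha)]

theorem Commute.mul_pow_mul_sq_add_sq_pow {R : Type*} [Semiring R] {a b : R} (h : Commute a b)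
    (α q : ℕ) :
    a * b ^ α * (a ^ 2 + b ^ 2) ^ q =
      ∑ k ∈ range (q + 1), q.choose k • (a ^ (2 * (q - k) + 1) * b ^ (2 * k + α)) := by
  rw [add_comm, (h.pow_pow 2 2).symm.add_pow, mul_sum]
  refine sum_congr rfl fun k _ => ?_
  rw [nsmul_eq_mul', ← pow_mul, ← pow_mul]
  simp only [← mul_assoc]
  congr 1
  rw [mul_assoc a, ← pow_add, mul_assoc, (h.pow_pow _ _).symm.eq, ← mul_assoc, ← pow_succ',
    add_comm α]

noncomputable def coeffDerivX (dx : ℝ) : Module.End ℝ (ℕ → ℕ → ℝ) where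
  toFun b l₁ l₂ := (l₁ + 1) / dx * b (l₁ + 1) l₂
  map_add' _ _ := by ext; simp only [Pi.add_apply]; ring
  map_smul' _ _ := by ext; simp only [Pi.smul_apply, smul_eq_mul, RingHom.id_apply]; ring

noncomputable def coeffDerivY (dy : ℝ) : Module.End ℝ (ℕ → ℕ → ℝ) where
  toFun b l₁ l₂ := (l₂ + 1) / dy * b l₁ (l₂ + 1)
  map_add' _ _ := by ext; simp only [Pi.add_apply]; ring
  map_smul' _ _ := by ext; simp only [Pi.smul_apply, smul_eq_mul, RingHom.id_apply]; ring

@[simp] lemma coeffDerivX_apply (dx : ℝ) (b : ℕ → ℕ → ℝ) (l₁ l₂ : ℕ) :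
    coeffDerivX dx b l₁ l₂ = (l₁ + 1) / dx * b (l₁ + 1) l₂ := rfl

@[simp] lemma coeffDerivY_apply (dy : ℝ) (b : ℕ → ℕ → ℝ) (l₁ l₂ : ℕ) :
    coeffDerivY dy b l₁ l₂ = (l₂ + 1) / dy * b l₁ (l₂ + 1) := rfl

noncomputable def coeffLaplacian (dx dy : ℝ) : Module.End ℝ (ℕ → ℕ → ℝ) :=
  coeffDerivX dx ^ 2 + coeffDerivY dy ^ 2

lemma coeffDerivX_pow_apply (dx : ℝ) (k : ℕ) (b : ℕ → ℕ → ℝ) (l₁ l₂ : ℕ) :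
    (coeffDerivX dx ^ k) b l₁ l₂ = (l₁ + k).descFactorial k / dx ^ k * b (l₁ + k) l₂ := by
  induction k generalizing b with
  | zero => simp
  | succ k ih =>
    rw [pow_succ, Module.End.mul_apply, ih, coeffDerivX_apply, ← add_assoc,
      Nat.succ_descFactorial_succ]
    push_cast
    ring

lemma coeffDerivY_pow_apply (dy : ℝ) (k : ℕ) (b : ℕ → ℕ → ℝ) (l₁ l₂ : ℕ) :
    (coeffDerivY dy ^ k) b l₁ l₂ = (l₂ + k).descFactorial k / dy ^ k * b l₁ (l₂ + k) := by
  induction k generalizing b with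
  | zero => simp
  | succ k ih =>
    rw [pow_succ, Module.End.mul_apply, ih, coeffDerivY_apply, ← add_assoc,
      Nat.succ_descFactorial_succ]
    push_cast
    ring

lemma commute_coeffDerivX_coeffDerivY (dx dy : ℝ) :
    Commute (coeffDerivX dx) (coeffDerivY dy) := by
  show coeffDerivX dx * coeffDerivY dy = coeffDerivY dy * coeffDerivX dx
  ext b l₁ l₂
  simp only [Module.End.mul_apply, coeffDerivX_apply, coeffDerivY_apply]
  ring

lemma coeffDerivX_mul_coeffDerivY_pow_mul_coeffLaplacian_pow_apply_zero (dx dy : ℝ)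
    (α q : ℕ) (b : ℕ → ℕ → ℝ) :
    ((coeffDerivX dx * coeffDerivY dy ^ α * coeffLaplacian dx dy ^ q) b) 0 0 =
      ∑ k ∈ range (q + 1), q.choose k *
        ((2 * (q - k) + 1).factorial / dx ^ (2 * (q - k) + 1) *
          ((2 * k + α).factorial / dy ^ (2 * k + α) * b (2 * (q - k) + 1) (2 * k + α))) := by
  rw [coeffLaplacian, (commute_coeffDerivX_coeffDerivY dx dy).mul_pow_mul_sq_add_sq_pow]
  simp only [LinearMap.sum_apply, Finset.sum_apply, LinearMap.smul_apply, Pi.smul_apply,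
    Module.End.mul_apply, coeffDerivX_pow_apply, coeffDerivY_pow_apply, zero_add,
    Nat.descFactorial_self]
  simp only [nsmul_eq_mul]

def boxSupported (n : ℕ) : Set (ℕ → ℕ → ℝ) :=
  {b | ∀ l₁ l₂, n < l₁ ∨ n < l₂ → b l₁ l₂ = 0}

noncomputable def boxPoly (xi yj dx dy : ℝ) (n : ℕ) (b : ℕ → ℕ → ℝ) : ℝ × ℝ → ℝ :=
  fun p => ∑ l₁ ∈ range (n + 1), ∑ l₂ ∈ range (n + 1),
    b l₁ l₂ * ((p.1 - xi) / dx) ^ l₁ * ((p.2 - yj) / dy) ^ l₂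

def boxTrunc (n : ℕ) (b : ℕ → ℕ → ℝ) : ℕ → ℕ → ℝ :=
  fun l₁ l₂ => if l₁ ≤ n ∧ l₂ ≤ n then b l₁ l₂ else 0

lemma boxTrunc_mem_boxSupported (n : ℕ) (b : ℕ → ℕ → ℝ) : boxTrunc n b ∈ boxSupported n :=
  fun l₁ l₂ h => if_neg (by omega)

lemma boxPoly_boxTrunc (xi yj dx dy : ℝ) (n : ℕ) (b : ℕ → ℕ → ℝ) :
    boxPoly xi yj dx dy n (boxTrunc n b) = boxPoly xi yj dx dy n b := by
  funext p
  refine sum_congr rfl fun l₁ hl₁ => sum_congr rfl fun l₂ hl₂ => ?_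
  rw [mem_range] at hl₁ hl₂
  rw [boxTrunc, if_pos (by omega)]

section BoxPoly

variable {xi yj dx dy : ℝ} {n : ℕ}

lemma mapsTo_coeffDerivX : Set.MapsTo (coeffDerivX dx) (boxSupported n) (boxSupported n) :=
  fun b hb l₁ l₂ h => by simp [hb (l₁ + 1) l₂ (by omega)]

lemma mapsTo_coeffDerivY : Set.MapsTo (coeffDerivY dy) (boxSupported n) (boxSupported n) :=
  fun b hb l₁ l₂ h => by simp [hb l₁ (l₂ + 1) (by omega)]

lemma mapsTo_coeffLaplacian :
    Set.MapsTo (coeffLaplacian dx dy) (boxSupported n) (boxSupported n) := by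
  intro b hb l₁ l₂ h
  simp only [coeffLaplacian, sq, LinearMap.add_apply, Module.End.mul_apply, Pi.add_apply,
    mapsTo_coeffDerivX (mapsTo_coeffDerivX hb) l₁ l₂ h,
    mapsTo_coeffDerivY (mapsTo_coeffDerivY hb) l₁ l₂ h, add_zero]

lemma pd1_boxPoly {b : ℕ → ℕ → ℝ} (hb : b ∈ boxSupported n) :
    pd1 (boxPoly xi yj dx dy n b) = boxPoly xi yj dx dy n (coeffDerivX dx b) := by
  funext p
  set v := (p.2 - yj) / dy
  have h := hasDerivAt_sum_range_mul_div_pow (n := n)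
    (fun l₁ => ∑ l₂ ∈ range (n + 1), b l₁ l₂ * v ^ l₂)
    (sum_eq_zero fun l₂ _ => by simp [hb (n + 1) l₂ (by omega)]) xi dx p.1
  have hfun : (fun x => boxPoly xi yj dx dy n b (x, p.2)) =
      fun x => ∑ l₁ ∈ range (n + 1), (∑ l₂ ∈ range (n + 1), b l₁ l₂ * v ^ l₂) *
        ((x - xi) / dx) ^ l₁ := by
    funext x
    simp only [boxPoly, sum_mul]
    exact sum_congr rfl fun _ _ => sum_congr rfl fun _ _ => mul_right_comm _ _ _
  show deriv (fun x => boxPoly xi yj dx dy n b (x, p.2)) p.1 = _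
  rw [hfun, h.deriv]
  simp only [boxPoly, coeffDerivX_apply, mul_sum, sum_mul]
  exact sum_congr rfl fun _ _ => sum_congr rfl fun _ _ => by ring

lemma pd2_boxPoly {b : ℕ → ℕ → ℝ} (hb : b ∈ boxSupported n) :
    pd2 (boxPoly xi yj dx dy n b) = boxPoly xi yj dx dy n (coeffDerivY dy b) := by
  funext p
  have h := HasDerivAt.fun_sum (u := range (n + 1)) fun l₁ _ =>
    hasDerivAt_sum_range_mul_div_pow (n := n) (fun l₂ => b l₁ l₂ * ((p.1 - xi) / dx) ^ l₁)
      (by simp [hb l₁ (n + 1) (by omega)]) yj dy p.2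
  simp only [pd2, boxPoly, h.deriv, coeffDerivY_apply]
  exact sum_congr rfl fun _ _ => sum_congr rfl fun _ _ => by ring

lemma lapl2_boxPoly {b : ℕ → ℕ → ℝ} (hb : b ∈ boxSupported n) :
    lapl2 (boxPoly xi yj dx dy n b) = boxPoly xi yj dx dy n (coeffLaplacian dx dy b) := by
  funext p
  simp only [lapl2, pd1_boxPoly hb, pd1_boxPoly (mapsTo_coeffDerivX hb), pd2_boxPoly hb,
    pd2_boxPoly (mapsTo_coeffDerivY hb), boxPoly, coeffLaplacian, sq, LinearMap.add_apply,
    Module.End.mul_apply, Pi.add_apply, add_mul, sum_add_distrib]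

lemma boxPoly_center (b : ℕ → ℕ → ℝ) : boxPoly xi yj dx dy n b (xi, yj) = b 0 0 := by
  simp only [boxPoly, sub_self, zero_div]
  rw [sum_eq_single_of_mem 0 (by simp) fun l₁ _ h => sum_eq_zero fun l₂ _ => by simp [h],
    sum_eq_single_of_mem 0 (by simp) fun l₂ _ h => by simp [h]]
  simp

lemma pd1_pd2_iterate_lapl2_iterate_boxPoly {b : ℕ → ℕ → ℝ}
    (hb : b ∈ boxSupported n) (α q : ℕ) :
    pd1 (pd2^[α] (lapl2^[q] (boxPoly xi yj dx dy n b))) =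
      boxPoly xi yj dx dy n
        ((coeffDerivX dx * coeffDerivY dy ^ α * coeffLaplacian dx dy ^ q) b) := by
  have hq := (mapsTo_coeffLaplacian (dx := dx) (dy := dy)).iterate q hb
  rw [iterate_apply_eq_of_mapsTo mapsTo_coeffLaplacian (fun _ => lapl2_boxPoly) q hb,
    iterate_apply_eq_of_mapsTo mapsTo_coeffDerivY (fun _ => pd2_boxPoly) α hq,
    pd1_boxPoly (mapsTo_coeffDerivY.iterate α hq)]
  simp only [Module.End.mul_apply, Module.End.pow_apply]

end BoxPoly

theorem neumann_hermite_cbc_formula_general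
    (m : ℕ) (xi yj dx dy : ℝ) (co : ℕ → ℕ → ℝ)
    (c : ℝ) :
    ∀ q α : ℕ, q ≤ m → α ≤ 2 * m + 1 →
      c ^ (2 * q) *
        (pd1 (pd2^[α] (lapl2^[q] (taylorPoly m xi yj dx dy co)))) (xi, yj)
      = c ^ (2 * q) *
          ∑ k ∈ (Finset.range (q + 1)).filter (fun k => 2 * k + α ≤ 2 * m + 1),
            (q.choose k : ℝ) *
              (((2 * (q - k) + 1).factorial : ℝ) / dx ^ (2 * (q - k) + 1)) *
              (((2 * k + α).factorial : ℝ) / dy ^ (2 * k + α)) *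
              co (2 * (q - k) + 1) (2 * k + α) := by
  intro q α hq _
  have htaylor : taylorPoly m xi yj dx dy co = boxPoly xi yj dx dy (2 * m + 1) co := rfl
  rw [htaylor, ← boxPoly_boxTrunc,
    pd1_pd2_iterate_lapl2_iterate_boxPoly (boxTrunc_mem_boxSupported _ _), boxPoly_center,
    coeffDerivX_mul_coeffDerivY_pow_mul_coeffLaplacian_pow_apply_zero, sum_filter]
  congr 1
  refine sum_congr rfl fun k _ => ?_
  have hx : 2 * (q - k) + 1 ≤ 2 * m + 1 := by omega
  by_cases hy : 2 * k + α ≤ 2 * m + 1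
  · rw [boxTrunc, if_pos ⟨hx, hy⟩, if_pos hy]
    ring
  · rw [boxTrunc, if_neg (by omega), if_neg hy]
    ring

theorem neumann_hermite_cbc_formula
    (m : ℕ) (xi yj dx dy : ℝ) (hdx : dx ≠ 0) (hdy : dy ≠ 0) (co : ℕ → ℕ → ℝ)
    (c : ℝ) :
    ∀ q α : ℕ, q ≤ m → α ≤ 2 * m + 1 →
      c ^ (2 * q) *
        (pd1 (pd2^[α] (lapl2^[q] (taylorPoly m xi yj dx dy co)))) (xi, yj)
      = c ^ (2 * q) *
          ∑ k ∈ (Finset.range (q + 1)).filter (fun k => 2 * k + α ≤ 2 * m + 1),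
            (q.choose k : ℝ) *
              (((2 * (q - k) + 1).factorial : ℝ) / dx ^ (2 * (q - k) + 1)) *
              (((2 * k + α).factorial : ℝ) / dy ^ (2 * k + α)) *
              co (2 * (q - k) + 1) (2 * k + α) :=
  neumann_hermite_cbc_formula_general m xi yj dx dy co c
end
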